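/- arXiv:2009.01488 — 5 statements merged into one kernel-verified Lean document; each statement's English description precedes it below -/
import Mathlib

section
/- Let (X,d) be a metric space, T a finite nonempty subset of size n, and c* ∈ X. Suppose s, t ∈ X satisfy d(s, c*) ≤ 2·cost(T,c*)/n and cost(T,t) ≤ 2·cost(T,s), where cost(T,x) = ∑_{τ∈T} d(τ,x). Then d(t, c*) ≤ 7·cost(T,c*)/n. -/
theorem statement7 {X : Type*} [MetricSpace X] (T : Finset X) (hT : T.Nonempty)
    (cstar s t : X)
    (hs : dist s cstar ≤ 2 * (∑ τ ∈ T, dist τ cstar) / T.card)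
    (ht : (∑ τ ∈ T, dist τ t) ≤ 2 * (∑ τ ∈ T, dist τ s)) :
    dist t cstar ≤ 7 * (∑ τ ∈ T, dist τ cstar) / T.card := by
  have hn : (0:ℝ) < T.card := by exact_mod_cast Finset.card_pos.mpr hT
  set C := ∑ τ ∈ T, dist τ cstar with hC
  have h1 : ∑ τ ∈ T, dist τ s ≤ C + T.card * dist s cstar := by
    calc ∑ τ ∈ T, dist τ s ≤ ∑ τ ∈ T, (dist τ cstar + dist s cstar) :=
          Finset.sum_le_sum fun τ _ => by
            have h := dist_triangle τ cstar s
            have h2 := dist_comm cstar s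
            linarith
      _ = C + T.card * dist s cstar := by
          rw [Finset.sum_add_distrib, Finset.sum_const, nsmul_eq_mul]
  have h2 : (T.card : ℝ) * dist t cstar ≤ (∑ τ ∈ T, dist τ t) + C := by
    have h : ∑ τ ∈ T, dist t cstar ≤ ∑ τ ∈ T, (dist τ t + dist τ cstar) :=
      Finset.sum_le_sum fun τ _ => by
        have h := dist_triangle t τ cstar
        have h2 := dist_comm t τ
        linarith
    simpa [Finset.sum_add_distrib, Finset.sum_const, nsmul_eq_mul] using h
  have hs' : (T.card : ℝ) * dist s cstar ≤ 2 * C := by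
    have := (le_div_iff₀ hn).mp hs
    linarith [this]
  rw [le_div_iff₀ hn]
  nlinarith [h1, h2, hs', ht]
end

section
/- Under the assumptions of the previous statement, if additionally c ∈ X satisfies d(t, c) ≤ α·d(t, c*) for some α ≥ 1, then cost(T, c) ≤ (6 + 7α)·cost(T, c*). -/
theorem statement8 {X : Type*} [MetricSpace X] (T : Finset X) (hT : T.Nonempty)
    (cstar s t c : X) (α : ℝ) (hα : 1 ≤ α)
    (hs : dist s cstar ≤ 2 * (∑ τ ∈ T, dist τ cstar) / T.card)
    (ht : (∑ τ ∈ T, dist τ t) ≤ 2 * (∑ τ ∈ T, dist τ s))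
    (hc : dist t c ≤ α * dist t cstar) :
    (∑ τ ∈ T, dist τ c) ≤ (6 + 7 * α) * (∑ τ ∈ T, dist τ cstar) := by
  set n : ℝ := (T.card : ℝ) with hn
  have hn0 : (0:ℝ) < n := by
    simp [hn, Finset.card_pos.mpr hT]
  set C := ∑ τ ∈ T, dist τ cstar with hC
  have hC0 : 0 ≤ C := Finset.sum_nonneg fun τ _ => dist_nonneg
  -- n * d(s,cstar) ≤ 2C
  have h1 : n * dist s cstar ≤ 2 * C := by
    have h := (le_div_iff₀ hn0).mp hs
    linarith [mul_comm (dist s cstar) n ▸ h]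
  -- cost s ≤ C + n * d(s,cstar)
  have h2 : (∑ τ ∈ T, dist τ s) ≤ C + n * dist s cstar := by
    have : (∑ τ ∈ T, dist τ s) ≤ ∑ τ ∈ T, (dist τ cstar + dist cstar s) :=
      Finset.sum_le_sum fun τ _ => dist_triangle τ cstar s
    simpa [Finset.sum_add_distrib, hC, hn, dist_comm s cstar, mul_comm] using this
  -- cost t ≤ 6C
  have h3 : (∑ τ ∈ T, dist τ t) ≤ 6 * C := by linarith
  -- n * d(t,cstar) ≤ cost t + C
  have h4 : n * dist t cstar ≤ (∑ τ ∈ T, dist τ t) + C := by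
    have : (∑ τ ∈ T, dist t cstar) ≤ ∑ τ ∈ T, (dist t τ + dist τ cstar) :=
      Finset.sum_le_sum fun τ _ => dist_triangle t τ cstar
    simpa [Finset.sum_add_distrib, hC, hn, dist_comm t, mul_comm] using this
  have h5 : (∑ τ ∈ T, dist τ c) ≤ (∑ τ ∈ T, dist τ t) + n * dist t c := by
    have : (∑ τ ∈ T, dist τ c) ≤ ∑ τ ∈ T, (dist τ t + dist t c) :=
      Finset.sum_le_sum fun τ _ => dist_triangle τ t c
    simpa [Finset.sum_add_distrib, hn, mul_comm] using this
  have hα0 : 0 ≤ α := by linarith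
  have h6 : n * dist t c ≤ α * (7 * C) := by
    calc n * dist t c ≤ n * (α * dist t cstar) := by
          exact mul_le_mul_of_nonneg_left hc (le_of_lt hn0)
      _ = α * (n * dist t cstar) := by ring
      _ ≤ α * (7 * C) := by
          apply mul_le_mul_of_nonneg_left _ hα0
          linarith
  linarith
end

section
/- Let (X,d) be a metric space, T finite nonempty of size n, c* ∈ X, ε ∈ (0,1), and suppose s, t ∈ X satisfy d(s, c*) ≤ (1+ε)·cost(T,c*)/n and cost(T,t) ≤ (1+ε)·cost(T,s). Then d(t, c*) ≤ (3+4ε)·cost(T,c*)/n. -/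
theorem statement9 {X : Type*} [MetricSpace X] (T : Finset X) (hT : T.Nonempty)
    (cstar s t : X) (ε : ℝ) (hε : ε ∈ Set.Ioo (0 : ℝ) 1)
    (hs : dist s cstar ≤ (1 + ε) * (∑ τ ∈ T, dist τ cstar) / T.card)
    (ht : (∑ τ ∈ T, dist τ t) ≤ (1 + ε) * (∑ τ ∈ T, dist τ s)) :
    dist t cstar ≤ (3 + 4 * ε) * (∑ τ ∈ T, dist τ cstar) / T.card := by
  obtain ⟨hε0, hε1⟩ := hε
  have hn : (0:ℝ) < T.card := by exact_mod_cast Finset.card_pos.mpr hT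
  have hC : 0 ≤ ∑ τ ∈ T, dist τ cstar :=
    Finset.sum_nonneg fun τ _ => dist_nonneg
  have h1 : (T.card:ℝ) * dist t cstar ≤ (∑ τ ∈ T, dist τ t) + ∑ τ ∈ T, dist τ cstar := by
    rw [← Finset.sum_add_distrib]
    calc (T.card:ℝ) * dist t cstar = ∑ _τ ∈ T, dist t cstar := by
          rw [Finset.sum_const, nsmul_eq_mul]
      _ ≤ ∑ τ ∈ T, (dist τ t + dist τ cstar) := by
          exact Finset.sum_le_sum fun τ _ => dist_triangle_left t cstar τ
  have h2 : (∑ τ ∈ T, dist τ s) ≤ (∑ τ ∈ T, dist τ cstar) + (T.card:ℝ) * dist s cstar := by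
    calc (∑ τ ∈ T, dist τ s) ≤ ∑ τ ∈ T, (dist τ cstar + dist cstar s) :=
          Finset.sum_le_sum fun τ _ => dist_triangle τ cstar s
      _ = (∑ τ ∈ T, dist τ cstar) + ∑ _τ ∈ T, dist cstar s := by
          rw [Finset.sum_add_distrib]
      _ = (∑ τ ∈ T, dist τ cstar) + (T.card:ℝ) * dist s cstar := by
          rw [Finset.sum_const, nsmul_eq_mul, dist_comm]
  rw [le_div_iff₀ hn] at hs
  rw [le_div_iff₀ hn]
  nlinarith [mul_le_mul_of_nonneg_left hs (by linarith : (0:ℝ) ≤ 1 + ε),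
    mul_le_mul_of_nonneg_left h2 (by linarith : (0:ℝ) ≤ 1 + ε),
    mul_nonneg hε0.le hC]
end

section
/- Let (X,d) be a metric space, T finite of size n ≥ 1, ε ∈ (0, 0.158], c, c* ∈ X, and define B_c = {τ ∈ T : d(τ,c) ≤ ε·cost(T,c*)/n}. Suppose |T \ B_c| < |T ∩ B_c| / 2 and d(c, c*) > 4ε·cost(T,c*)/n. Suppose furthermore that for every τ ∈ T ∩ B_c, d(τ,c*) - d(τ,c) > d(c,c*)/2. Then cost(T,c) < cost(T,c*). -/
theorem statement11 {X : Type*} [MetricSpace X] [DecidableEq X]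
    (T : Finset X) (hT : T.Nonempty) (c cstar : X) (ε : ℝ)
    (hε : ε ∈ Set.Ioc (0 : ℝ) 0.158)
    (B : Finset X)
    (hB : B = T.filter (fun τ => dist τ c ≤ ε * (∑ τ ∈ T, dist τ cstar) / T.card))
    (hsmall : ((T \ B).card : ℝ) < ((T ∩ B).card : ℝ) / 2)
    (hfar : dist c cstar > 4 * ε * (∑ τ ∈ T, dist τ cstar) / T.card)
    (hgain : ∀ τ ∈ T ∩ B, dist τ cstar - dist τ c > dist c cstar / 2) :
    (∑ τ ∈ T, dist τ c) < (∑ τ ∈ T, dist τ cstar) := by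
  obtain ⟨hε0, -⟩ := hε
  have hsum0 : (0:ℝ) ≤ ∑ τ ∈ T, dist τ cstar :=
    Finset.sum_nonneg fun _ _ => dist_nonneg
  have hcard0 : (0:ℝ) ≤ (T.card : ℝ) := Nat.cast_nonneg _
  have hD : (0:ℝ) < dist c cstar := by
    refine lt_of_le_of_lt ?_ hfar
    positivity
  have hsplit : ∀ f : X → ℝ, ∑ τ ∈ T, f τ = ∑ τ ∈ T ∩ B, f τ + ∑ τ ∈ T \ B, f τ :=
    fun f => (Finset.sum_inter_add_sum_sdiff T B f).symm
  rw [hsplit (fun τ => dist τ c), hsplit (fun τ => dist τ cstar)]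
  have h1 : ∑ τ ∈ T ∩ B, dist τ c ≤
      (∑ τ ∈ T ∩ B, dist τ cstar) - ((T ∩ B).card : ℝ) * (dist c cstar / 2) := by
    have h := Finset.sum_le_sum (f := fun τ => dist τ c)
      (g := fun τ => dist τ cstar - dist c cstar / 2) (s := T ∩ B)
      (fun τ hτ => by linarith [hgain τ hτ])
    simpa [Finset.sum_sub_distrib, Finset.sum_const, nsmul_eq_mul] using h
  have h2 : ∑ τ ∈ T \ B, dist τ c ≤
      (∑ τ ∈ T \ B, dist τ cstar) + ((T \ B).card : ℝ) * dist c cstar := by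
    have h := Finset.sum_le_sum (f := fun τ => dist τ c)
      (g := fun τ => dist τ cstar + dist c cstar) (s := T \ B)
      (fun τ _ => by
        have := dist_triangle τ cstar c
        rw [dist_comm cstar c] at this
        exact this)
    simpa [Finset.sum_add_distrib, Finset.sum_const, nsmul_eq_mul] using h
  have h3 : ((T \ B).card : ℝ) * dist c cstar <
      ((T ∩ B).card : ℝ) * (dist c cstar / 2) := by
    nlinarith
  linarith
end

section
/- The recurrence T(n,κ) ≤ C·T(n,κ-1) + T(n/2,κ) + c·n·f for n > κ ≥ 1 (with T(n,0) ≤ c, T(n,κ) ≤ c·n if κ ≥ n, C ≥ 1, c ≥ 1, f ≥ 1, n a power of 2) satisfies T(n,κ) ≤ c·4^κ·C^{κ+1}·n·f. -/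
private lemma onemul16 {a b : ℝ} (ha : 1 ≤ a) (hb : 1 ≤ b) : 1 ≤ a * b := by nlinarith

theorem statement16 (T : ℕ → ℕ → ℝ) (c C f : ℝ)
    (hc : 1 ≤ c) (hC : 1 ≤ C) (hf : 1 ≤ f)
    (hbase0 : ∀ n, T n 0 ≤ c)
    (hbase1 : ∀ n κ, n ≤ κ → T n κ ≤ c * n)
    (hrec : ∀ n κ, κ < n → 1 ≤ κ →
      T n κ ≤ C * T n (κ - 1) + T (n / 2) κ + c * n * f) :
    ∀ κ n, (∃ j : ℕ, n = 2 ^ j) →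
      T n κ ≤ c * 4 ^ κ * C ^ (κ + 1) * n * f := by
  have hc0 : (0:ℝ) ≤ c := by linarith
  have hf0 : (0:ℝ) ≤ f := by linarith
  intro κ
  induction κ with
  | zero =>
    rintro n ⟨j, rfl⟩
    have hn1 : (1:ℝ) ≤ (2:ℝ)^j := one_le_pow₀ (by norm_num)
    have hX : (1:ℝ) ≤ 4^0 * C^1 * (2:ℝ)^j * f :=
      onemul16 (onemul16 (onemul16 (by norm_num) (by simpa using hC)) hn1) hf
    calc T (2^j) 0 ≤ c := hbase0 _
      _ ≤ c * 4^0 * C^(0+1) * (2^j : ℕ) * f := by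
          push_cast
          nlinarith [mul_le_mul_of_nonneg_left hX hc0]
  | succ k ih =>
    rintro n ⟨j, rfl⟩
    induction j with
    | zero =>
      have hX : (1:ℝ) ≤ 4^(k+1) * C^(k+2) * f :=
        onemul16 (onemul16 (one_le_pow₀ (by norm_num)) (one_le_pow₀ hC)) hf
      calc T (2^0) (k+1) ≤ c * (2^0 : ℕ) := hbase1 _ _ (by omega)
        _ ≤ c * 4^(k+1) * C^(k+1+1) * (2^0 : ℕ) * f := by
            push_cast
            nlinarith [mul_le_mul_of_nonneg_left hX hc0]
    | succ i ihj =>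
      by_cases hle : 2^(i+1) ≤ k+1
      · have hX : (1:ℝ) ≤ 4^(k+1) * C^(k+2) * f :=
          onemul16 (onemul16 (one_le_pow₀ (by norm_num)) (one_le_pow₀ hC)) hf
        have hn0 : (0:ℝ) ≤ (2:ℝ)^(i+1) := by positivity
        calc T (2^(i+1)) (k+1) ≤ c * (2^(i+1) : ℕ) := hbase1 _ _ hle
          _ ≤ c * 4^(k+1) * C^(k+1+1) * (2^(i+1) : ℕ) * f := by
              push_cast
              nlinarith [mul_le_mul_of_nonneg_left hX (mul_nonneg hc0 hn0)]
      · have hlt : k+1 < 2^(i+1) := by omega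
        have hdiv : (2^(i+1) : ℕ) / 2 = 2^i := by
          rw [pow_succ, Nat.mul_div_cancel _ (by norm_num)]
        have hrec' := hrec (2^(i+1)) (k+1) hlt (by omega)
        rw [hdiv] at hrec'
        simp only [Nat.add_sub_cancel] at hrec'
        have hA : T (2^(i+1)) k ≤ c * 4^k * C^(k+1) * (2^(i+1) : ℕ) * f :=
          ih _ ⟨i+1, rfl⟩
        have hC0 : (0:ℝ) ≤ C := by linarith
        have hCxy : (1:ℝ) ≤ C * 4^k * C^(k+1) :=
          onemul16 (onemul16 hC (one_le_pow₀ (by norm_num))) (one_le_pow₀ hC)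
        have hczf : (0:ℝ) ≤ c * (2:ℝ)^i * f := by positivity
        have target : C * (c * 4^k * C^(k+1) * (2^(i+1) : ℕ) * f)
            + c * 4^(k+1) * C^(k+1+1) * (2^i : ℕ) * f + c * (2^(i+1) : ℕ) * f
            ≤ c * 4^(k+1) * C^(k+1+1) * (2^(i+1) : ℕ) * f := by
          push_cast
          rw [show (4:ℝ)^(k+1) = 4 * 4^k by ring,
            show C^(k+1+1) = C * C^(k+1) by ring,
            show (2:ℝ)^(i+1) = 2 * (2:ℝ)^i by ring]
          nlinarith [mul_le_mul_of_nonneg_left hCxy hczf]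
        calc T (2^(i+1)) (k+1)
            ≤ C * T (2^(i+1)) k + T (2^i) (k+1) + c * (2^(i+1) : ℕ) * f := hrec'
          _ ≤ C * (c * 4^k * C^(k+1) * (2^(i+1) : ℕ) * f)
              + c * 4^(k+1) * C^(k+1+1) * (2^i : ℕ) * f + c * (2^(i+1) : ℕ) * f := by
              gcongr
          _ ≤ c * 4^(k+1) * C^(k+1+1) * (2^(i+1) : ℕ) * f := target
end
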